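/- In the example chain, for every α ∈ (0,1): v_α(0) = 1/(1−α); v_α(n,k) = 1/(1−α) + ε^(n)·[(1−α^{N(n)})·α^{N(n)−k+1} − (1−α^{N(n)−k+1})]/(1−α) for k = 1,…,N(n); v_α(n,k) = 1/(1−α) + ε^(n)·(1−α^{2N(n)−k+1})/(1−α) for k = N(n)+1,…,2N(n); moreover v_α(n,1) ≤ v_α(n,k) for k = 1,…,N(n), v_α(n,1) < v_α(0) < v_α(n,N(n)+k) for k = 1,…,N(n), and m_α := inf over all states of v_α equals 1/(1−α) − sup_{n≥1} ε^(n)·(1−α^{N(n)})²/(1−α). -/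

import Mathlib

open Filter Topology

/-- `ε_β := 1 − β`. -/
noncomputable def epsP (β : ℝ) : ℝ := 1 - β

/-- `γ_{β,M} := max{(β+1)/2, 1 − ε_β/(3M)}`. -/
noncomputable def gammaP (β M : ℝ) : ℝ := max ((β + 1) / 2) (1 - epsP β / (3 * M))

/-- `n*_{β,M} := ⌊log_{γ_{β,M}}(min{1/2, M(1−γ_{β,M})/ε_β})⌋ + 1`. -/
noncomputable def nStar (β M : ℝ) : ℕ :=
  (⌊Real.logb (gammaP β M) (min (1 / 2) (M * (1 - gammaP β M) / epsP β))⌋).toNat + 1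

/-- `δ_{β,M} := max{(γ_{β,M}+1)/2, (1 − 1/(ε_β n*_{β,M}))^(1/n*_{β,M})}`. -/
noncomputable def deltaP (β M : ℝ) : ℝ :=
  max ((gammaP β M + 1) / 2)
    ((1 - 1 / (epsP β * (nStar β M : ℝ))) ^ ((1 : ℝ) / (nStar β M : ℝ)))

/-- `g_{β,M}(α) := ε_β (1 − α^{n*_{β,M}})² / (1 − α)`. -/
noncomputable def gFun (β M α : ℝ) : ℝ := epsP β * (1 - α ^ nStar β M) ^ 2 / (1 - α)

/-- The sequence `α^(1), α^(2), …` of the example: `α^(n+1) := δ_{α^(n), n}`; here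
`alphaSeq a1 n = α^(n+1)`, i.e. indices are shifted by one. -/
noncomputable def alphaSeq (a1 : ℝ) : ℕ → ℝ
  | 0 => a1
  | n + 1 => deltaP (alphaSeq a1 n) ((n : ℝ) + 1)

/-- `N(n) := n*_{α^(n), n}` of the example (meaningful for `n ≥ 1`). -/
noncomputable def Nex (a1 : ℝ) (n : ℕ) : ℕ := nStar (alphaSeq a1 (n - 1)) (n : ℝ)

/-- `ε^(n) := ε_{α^(n)} = 1 − α^(n)` of the example (meaningful for `n ≥ 1`). -/
noncomputable def epsEx (a1 : ℝ) (n : ℕ) : ℝ := epsP (alphaSeq a1 (n - 1))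

/-- The deterministic transitions of the example chain: `0 → 0`,
`(n,k) → (n,k+1)` for `k < 2N(n)`, and `(n,2N(n)) → 0`; the state `0` is `none`. -/
noncomputable def stepEx (a1 : ℝ) : Option (ℕ × ℕ) → Option (ℕ × ℕ)
  | none => none
  | some (n, k) => if k < 2 * Nex a1 n then some (n, k + 1) else none

/-- The one-step costs of the example chain: `c(0) = 1`, `c(n,k) = 1 − ε^(n)` for
`k ≤ N(n)` and `c(n,k) = 1 + ε^(n)` for `N(n) < k ≤ 2N(n)`. -/
noncomputable def costEx (a1 : ℝ) : Option (ℕ × ℕ) → ℝ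
  | none => 1
  | some (n, k) => if k ≤ Nex a1 n then 1 - epsEx a1 n else 1 + epsEx a1 n

/-- `v_α(x) := Σ_{t≥0} α^t c(x_t)`, the discounted value of the example chain
started at `x`. -/
noncomputable def vEx (a1 α : ℝ) (x : Option (ℕ × ℕ)) : ℝ :=
  ∑' t : ℕ, α ^ t * costEx a1 ((stepEx a1)^[t] x)

/-- The genuine states of the example chain:
`{0} ∪ {(n,k) : n ≥ 1, 1 ≤ k ≤ 2N(n)}`. -/
def validEx (a1 : ℝ) : Set (Option (ℕ × ℕ)) :=
  {none} ∪ {s | ∃ n k : ℕ, 1 ≤ n ∧ 1 ≤ k ∧ k ≤ 2 * Nex a1 n ∧ s = some (n, k)}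

/-- `m_α := inf_{x ∈ X} v_α(x)` over the states of the example chain. -/
noncomputable def mEx (a1 α : ℝ) : ℝ := sInf (vEx a1 α '' validEx a1)

/-!
The chain is deterministic, so `v_α(x) = c(x) + α v_α(next x)`. At the absorbing state `0`
this gives `1/(1-α)`, and along an excursion `(n,1) → ⋯ → (n,2N(n)) → 0` the closed forms follow
by backward induction from the exit. Within an excursion the value is smallest at `(n,1)`, where it
equals `1/(1-α) - ε^(n)(1-α^N(n))²/(1-α)`; this gives the infimum.

The recursive choice of `α^(n)` only matters through `0 < ε^(n) ≤ 1 - α^(1)`: `δ_{β,M} ≥ β`, so the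
sequence increases, and `δ_{β,M} < 1` because Bernoulli's inequality applied to `γ^{n*} ≤ 1/2`
gives `ε_β n* ≥ 3M/2 ≥ 1`.
-/

section Parameters

variable {β M : ℝ}

lemma epsP_pos (hβ : β < 1) : 0 < epsP β := sub_pos.2 hβ

lemma gammaP_pos (hβ : -1 < β) : 0 < gammaP β M :=
  lt_max_of_lt_left (by linarith)

lemma gammaP_lt_one (hβ : β < 1) (hM : 0 < M) : gammaP β M < 1 :=
  max_lt (by linarith) (sub_lt_self _ (div_pos (epsP_pos hβ) (by positivity)))

lemma one_sub_gammaP_le : 1 - gammaP β M ≤ epsP β / (3 * M) := by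
  unfold gammaP
  linarith [le_max_right ((β + 1) / 2) (1 - epsP β / (3 * M))]

lemma nStar_pos : 0 < nStar β M := Nat.succ_pos _

lemma pow_nStar_le_half (hβ₀ : -1 < β) (hβ : β < 1) (hM : 0 < M) :
    gammaP β M ^ nStar β M ≤ 1 / 2 := by
  have hγ₀ : 0 < gammaP β M := gammaP_pos hβ₀
  have hγ₁ : gammaP β M < 1 := gammaP_lt_one hβ hM
  set m := min (1 / 2) (M * (1 - gammaP β M) / epsP β)
  have hm : 0 < m :=
    lt_min one_half_pos (div_pos (mul_pos hM (sub_pos.2 hγ₁)) (epsP_pos hβ))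
  have hlog : Real.logb (gammaP β M) m ≤ nStar β M := by
    unfold nStar
    push_cast
    calc Real.logb (gammaP β M) m ≤ ⌊Real.logb (gammaP β M) m⌋ + 1 :=
          (Int.lt_floor_add_one _).le
      _ ≤ ((⌊Real.logb (gammaP β M) m⌋.toNat : ℤ) : ℝ) + 1 := by
          gcongr
          exact_mod_cast Int.self_le_toNat _
  calc gammaP β M ^ nStar β M = gammaP β M ^ (nStar β M : ℝ) := (Real.rpow_natCast _ _).symm
    _ ≤ gammaP β M ^ Real.logb (gammaP β M) m :=
        Real.rpow_le_rpow_of_exponent_ge hγ₀ hγ₁.le hlog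
    _ = m := Real.rpow_logb hγ₀ hγ₁.ne hm
    _ ≤ 1 / 2 := min_le_left _ _

lemma le_epsP_mul_nStar (hβ₀ : -1 < β) (hβ : β < 1) (hM : 0 < M) :
    3 * M / 2 ≤ epsP β * nStar β M := by
  have hbernoulli := one_add_mul_le_pow (a := gammaP β M - 1)
    (by linarith [gammaP_pos (M := M) hβ₀]) (nStar β M)
  rw [add_sub_cancel] at hbernoulli
  have hhalf : 1 / 2 ≤ (nStar β M : ℝ) * (epsP β / (3 * M)) := by
    nlinarith [pow_nStar_le_half hβ₀ hβ hM, mul_le_mul_of_nonneg_left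
      (one_sub_gammaP_le (β := β) (M := M)) (Nat.cast_nonneg (α := ℝ) (nStar β M))]
  rw [mul_div_assoc', le_div_iff₀ (by positivity)] at hhalf
  linarith

lemma le_deltaP (hβ : β ≤ 1) : β ≤ deltaP β M :=
  calc β ≤ ((β + 1) / 2 + 1) / 2 := by linarith
    _ ≤ (gammaP β M + 1) / 2 := by gcongr; exact le_max_left _ _
    _ ≤ deltaP β M := le_max_left _ _

lemma deltaP_lt_one (hβ₀ : -1 < β) (hβ : β < 1) (hM : 2 / 3 ≤ M) : deltaP β M < 1 := by
  have hM₀ : 0 < M := by linarith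
  have hεn := le_epsP_mul_nStar hβ₀ hβ hM₀
  have hinv_pos : 0 < 1 / (epsP β * nStar β M) := one_div_pos.2 (by linarith)
  have hinv_le : 1 / (epsP β * nStar β M) ≤ 1 := by
    rw [div_le_one (by linarith)]
    linarith
  refine max_lt (by linarith [gammaP_lt_one hβ hM₀]) (Real.rpow_lt_one ?_ ?_ ?_)
  · linarith
  · linarith
  · exact one_div_pos.2 (Nat.cast_pos.2 nStar_pos)

end Parameters

lemma alphaSeq_mem_Ico {a1 : ℝ} (ha1 : a1 ∈ Set.Ioo (-1) 1) (n : ℕ) :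
    alphaSeq a1 n ∈ Set.Ico a1 1 := by
  induction n with
  | zero => exact ⟨le_rfl, ha1.2⟩
  | succ n ih =>
    exact ⟨ih.1.trans (le_deltaP ih.2.le),
      deltaP_lt_one (by linarith [ha1.1, ih.1]) ih.2 (by linarith [n.cast_nonneg (α := ℝ)])⟩

lemma epsEx_mem_Ioc {a1 : ℝ} (ha1 : a1 ∈ Set.Ioo (-1) 1) (n : ℕ) :
    epsEx a1 n ∈ Set.Ioc 0 (1 - a1) := by
  obtain ⟨h₁, h₂⟩ := alphaSeq_mem_Ico ha1 (n - 1)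
  exact ⟨sub_pos.2 h₂, sub_le_sub_left h₁ 1⟩

lemma tsum_discounted_eq_add {X : Type*} (f : X → X) (c : X → ℝ) {α B : ℝ} (hα₀ : 0 ≤ α)
    (hα₁ : α < 1) {x : X} (hc : ∀ t, |c (f^[t] x)| ≤ B) :
    ∑' t, α ^ t * c (f^[t] x) = c x + α * ∑' t, α ^ t * c (f^[t] (f x)) := by
  have hs : Summable fun t => α ^ t * c (f^[t] x) := by
    refine ((summable_geometric_of_lt_one hα₀ hα₁).mul_right B).of_norm_bounded fun t => ?_
    rw [Real.norm_eq_abs, abs_mul, abs_of_nonneg (pow_nonneg hα₀ t)]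
    exact mul_le_mul_of_nonneg_left (hc t) (pow_nonneg hα₀ t)
  rw [hs.tsum_eq_zero_add, ← tsum_mul_left]
  simp only [pow_zero, one_mul, Function.iterate_zero_apply, pow_succ,
    Function.iterate_succ_apply]
  exact congrArg _ (tsum_congr fun t => by ring)

section ExampleChain

variable {a1 α : ℝ} {n k : ℕ}

lemma Nex_pos : 0 < Nex a1 n := nStar_pos

lemma stepEx_of_lt (h : k < 2 * Nex a1 n) : stepEx a1 (some (n, k)) = some (n, k + 1) :=
  if_pos h

lemma stepEx_two_mul_Nex : stepEx a1 (some (n, 2 * Nex a1 n)) = none :=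
  if_neg (lt_irrefl _)

lemma costEx_of_le (h : k ≤ Nex a1 n) : costEx a1 (some (n, k)) = 1 - epsEx a1 n :=
  if_pos h

lemma costEx_of_lt (h : Nex a1 n < k) : costEx a1 (some (n, k)) = 1 + epsEx a1 n :=
  if_neg h.not_ge

lemma abs_costEx_iterate_le (t : ℕ) :
    |costEx a1 ((stepEx a1)^[t] (some (n, k)))| ≤ 1 + |epsEx a1 n| := by
  induction t generalizing k with
  | zero =>
    by_cases hk : k ≤ Nex a1 n
    · rw [Function.iterate_zero_apply, costEx_of_le hk]
      exact abs_sub _ _ |>.trans_eq (by rw [abs_one])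
    · rw [Function.iterate_zero_apply, costEx_of_lt (not_le.1 hk)]
      exact abs_add_le _ _ |>.trans_eq (by rw [abs_one])
  | succ t ih =>
    rw [Function.iterate_succ_apply]
    by_cases hk : k < 2 * Nex a1 n
    · rw [stepEx_of_lt hk]
      exact ih
    · have hnone : stepEx a1 (some (n, k)) = none := if_neg hk
      rw [hnone, Function.iterate_fixed rfl]
      simp only [costEx, abs_one, le_add_iff_nonneg_right, abs_nonneg]

lemma vEx_eq_costEx_add (hα₀ : 0 ≤ α) (hα₁ : α < 1) (x : Option (ℕ × ℕ)) :
    vEx a1 α x = costEx a1 x + α * vEx a1 α (stepEx a1 x) := by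
  cases x with
  | none =>
    exact tsum_discounted_eq_add _ _ hα₀ hα₁ (B := 1) fun t => by
      rw [Function.iterate_fixed rfl]
      simp [costEx]
  | some p => exact tsum_discounted_eq_add _ _ hα₀ hα₁ abs_costEx_iterate_le

lemma vEx_none (hα₀ : 0 ≤ α) (hα₁ : α < 1) : vEx a1 α none = 1 / (1 - α) := by
  have h : vEx a1 α none = 1 + α * vEx a1 α none := vEx_eq_costEx_add hα₀ hα₁ none
  rw [eq_div_iff (by linarith)]
  linear_combination h

lemma vEx_two_mul_Nex_sub (hα₀ : 0 ≤ α) (hα₁ : α < 1) {j : ℕ} (hj : j < Nex a1 n) :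
    vEx a1 α (some (n, 2 * Nex a1 n - j)) =
      1 / (1 - α) + epsEx a1 n * (1 - α ^ (j + 1)) / (1 - α) := by
  have h1α : 1 - α ≠ 0 := by linarith
  induction j with
  | zero =>
    rw [vEx_eq_costEx_add hα₀ hα₁, Nat.sub_zero, stepEx_two_mul_Nex, vEx_none hα₀ hα₁,
      costEx_of_lt (by omega)]
    field_simp
    ring
  | succ j ih =>
    rw [vEx_eq_costEx_add hα₀ hα₁, stepEx_of_lt (by omega),
      show 2 * Nex a1 n - (j + 1) + 1 = 2 * Nex a1 n - j by omega, ih (by omega),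
      costEx_of_lt (by omega)]
    field_simp
    ring

lemma vEx_of_Nex_lt (hα₀ : 0 ≤ α) (hα₁ : α < 1) (hk₁ : Nex a1 n < k) (hk₂ : k ≤ 2 * Nex a1 n) :
    vEx a1 α (some (n, k)) =
      1 / (1 - α) + epsEx a1 n * (1 - α ^ (2 * Nex a1 n - k + 1)) / (1 - α) := by
  obtain ⟨j, hj, rfl⟩ : ∃ j < Nex a1 n, k = 2 * Nex a1 n - j :=
    ⟨2 * Nex a1 n - k, by omega, by omega⟩
  rw [vEx_two_mul_Nex_sub hα₀ hα₁ hj, show 2 * Nex a1 n - (2 * Nex a1 n - j) = j by omega]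

lemma vEx_Nex_sub (hα₀ : 0 ≤ α) (hα₁ : α < 1) {j : ℕ} (hj : j ≤ Nex a1 n) :
    vEx a1 α (some (n, Nex a1 n - j)) = 1 / (1 - α) +
      epsEx a1 n * ((1 - α ^ Nex a1 n) * α ^ (j + 1) - (1 - α ^ (j + 1))) / (1 - α) := by
  have h1α : 1 - α ≠ 0 := by linarith
  have hN := Nex_pos (a1 := a1) (n := n)
  induction j with
  | zero =>
    rw [vEx_eq_costEx_add hα₀ hα₁, Nat.sub_zero, stepEx_of_lt (by omega),
      vEx_of_Nex_lt hα₀ hα₁ (by omega) (by omega), costEx_of_le le_rfl,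
      show 2 * Nex a1 n - (Nex a1 n + 1) + 1 = Nex a1 n by omega]
    field_simp
    ring
  | succ j ih =>
    rw [vEx_eq_costEx_add hα₀ hα₁, stepEx_of_lt (by omega),
      show Nex a1 n - (j + 1) + 1 = Nex a1 n - j by omega, ih (by omega),
      costEx_of_le (by omega)]
    field_simp
    ring

lemma vEx_of_le_Nex (hα₀ : 0 ≤ α) (hα₁ : α < 1) (hk : k ≤ Nex a1 n) :
    vEx a1 α (some (n, k)) = 1 / (1 - α) + epsEx a1 n *
      ((1 - α ^ Nex a1 n) * α ^ (Nex a1 n - k + 1) - (1 - α ^ (Nex a1 n - k + 1))) / (1 - α) := by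
  obtain ⟨j, hj, rfl⟩ : ∃ j ≤ Nex a1 n, k = Nex a1 n - j := ⟨Nex a1 n - k, by omega, by omega⟩
  rw [vEx_Nex_sub hα₀ hα₁ hj, show Nex a1 n - (Nex a1 n - j) = j by omega]

lemma vEx_one (hα₀ : 0 ≤ α) (hα₁ : α < 1) :
    vEx a1 α (some (n, 1)) = 1 / (1 - α) - epsEx a1 n * (1 - α ^ Nex a1 n) ^ 2 / (1 - α) := by
  rw [vEx_of_le_Nex hα₀ hα₁ Nex_pos, Nat.sub_add_cancel Nex_pos]
  ring

lemma vEx_one_le (hα₀ : 0 ≤ α) (hα₁ : α < 1) (hε : 0 ≤ epsEx a1 n) (hk₁ : 1 ≤ k)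
    (hk₂ : k ≤ Nex a1 n) : vEx a1 α (some (n, 1)) ≤ vEx a1 α (some (n, k)) := by
  rw [vEx_of_le_Nex hα₀ hα₁ Nex_pos, vEx_of_le_Nex hα₀ hα₁ hk₂, Nat.sub_add_cancel Nex_pos]
  have hpow : α ^ Nex a1 n ≤ α ^ (Nex a1 n - k + 1) :=
    pow_le_pow_of_le_one hα₀ hα₁.le (by omega)
  have hpow_le_one : α ^ Nex a1 n ≤ 1 := pow_le_one₀ hα₀ hα₁.le
  gcongr 1 / (1 - α) + epsEx a1 n * ?_ / (1 - α)
  nlinarith [mul_le_mul_of_nonneg_left hpow (by linarith : 0 ≤ 2 - α ^ Nex a1 n)]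

lemma vEx_one_lt_vEx_none (hα₀ : 0 ≤ α) (hα₁ : α < 1) (hε : 0 < epsEx a1 n) :
    vEx a1 α (some (n, 1)) < vEx a1 α none := by
  rw [vEx_one hα₀ hα₁, vEx_none hα₀ hα₁]
  have hpow : α ^ Nex a1 n < 1 := pow_lt_one₀ hα₀ hα₁ Nex_pos.ne'
  have : 0 < epsEx a1 n * (1 - α ^ Nex a1 n) ^ 2 / (1 - α) :=
    div_pos (mul_pos hε (pow_pos (sub_pos.2 hpow) 2)) (sub_pos.2 hα₁)
  linarith

lemma vEx_none_lt (hα₀ : 0 ≤ α) (hα₁ : α < 1) (hε : 0 < epsEx a1 n) (hk₁ : Nex a1 n < k)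
    (hk₂ : k ≤ 2 * Nex a1 n) : vEx a1 α none < vEx a1 α (some (n, k)) := by
  rw [vEx_of_Nex_lt hα₀ hα₁ hk₁ hk₂, vEx_none hα₀ hα₁]
  exact lt_add_of_pos_right _ <|
    div_pos (mul_pos hε (sub_pos.2 (pow_lt_one₀ hα₀ hα₁ (by omega)))) (sub_pos.2 hα₁)

lemma mEx_eq (hα₀ : 0 ≤ α) (hα₁ : α < 1) (hε : ∀ n, 0 < epsEx a1 n)
    (hε_bdd : BddAbove (Set.range (epsEx a1))) :
    mEx a1 α = 1 / (1 - α) -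
      ⨆ n : {m : ℕ // 1 ≤ m}, epsEx a1 (n : ℕ) * (1 - α ^ Nex a1 (n : ℕ)) ^ 2 / (1 - α) := by
  set g : {m : ℕ // 1 ≤ m} → ℝ := fun n => epsEx a1 n * (1 - α ^ Nex a1 n) ^ 2 / (1 - α)
  have h1α : 0 < 1 - α := sub_pos.2 hα₁
  have hg_nonneg (n) : 0 ≤ g n := div_nonneg (mul_nonneg (hε n).le (sq_nonneg _)) h1α.le
  have hg_bdd : BddAbove (Set.range g) := by
    obtain ⟨B, hB⟩ := hε_bdd
    refine ⟨B / (1 - α), ?_⟩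
    rintro _ ⟨n, rfl⟩
    have hsq : (1 - α ^ Nex a1 n) ^ 2 ≤ 1 := by
      have := pow_le_one₀ (n := Nex a1 n) hα₀ hα₁.le
      have := pow_nonneg hα₀ (Nex a1 n)
      nlinarith
    have hB : epsEx a1 n ≤ B := hB ⟨n, rfl⟩
    exact div_le_div_of_nonneg_right (by nlinarith [hε n]) h1α.le
  have hsup_nonneg : 0 ≤ ⨆ n, g n := Real.iSup_nonneg hg_nonneg
  refine IsGLB.csInf_eq ⟨?_, fun b hb => ?_⟩ ⟨_, none, Or.inl rfl, rfl⟩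
  · rintro _ ⟨x, hx | ⟨n, k, hn, hk₁, hk₂, rfl⟩, rfl⟩
    · rw [Set.mem_singleton_iff.1 hx, vEx_none hα₀ hα₁]
      linarith
    · by_cases hk : k ≤ Nex a1 n
      · calc 1 / (1 - α) - ⨆ n, g n ≤ 1 / (1 - α) - g ⟨n, hn⟩ :=
              sub_le_sub_left (le_ciSup hg_bdd _) _
          _ = vEx a1 α (some (n, 1)) := (vEx_one hα₀ hα₁).symm
          _ ≤ vEx a1 α (some (n, k)) := vEx_one_le hα₀ hα₁ (hε n).le hk₁ hk
      · have := vEx_none_lt hα₀ hα₁ (hε n) (not_le.1 hk) hk₂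
        rw [vEx_none hα₀ hα₁] at this
        linarith
  · have hg_le (n : {m : ℕ // 1 ≤ m}) : g n ≤ 1 / (1 - α) - b := by
      have := hb ⟨some (n, 1), Or.inr ⟨n, 1, n.2, le_rfl, by linarith [Nex_pos (a1 := a1) (n := n)],
        rfl⟩, rfl⟩
      rw [vEx_one hα₀ hα₁] at this
      linarith
    linarith [ciSup_le hg_le]

end ExampleChain

/-- computation (14)–(15): in the example chain, for every `α ∈ (0,1)`:
`v_α(0) = 1/(1−α)`; the displayed closed forms for `v_α(n,k)` hold; `v_α(n,1) ≤ v_α(n,k)`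
for `k = 1,…,N(n)`; `v_α(n,1) < v_α(0) < v_α(n,N(n)+k)` for `k = 1,…,N(n)`; and
`m_α = 1/(1−α) − sup_{n≥1} ε^(n)(1−α^{N(n)})²/(1−α)`. -/
theorem stmt18 (a1 : ℝ) (ha1 : a1 ∈ Set.Ico (1 / 2 : ℝ) 1)
    (α : ℝ) (hα : α ∈ Set.Ioo (0 : ℝ) 1) :
    vEx a1 α none = 1 / (1 - α) ∧
    (∀ n k : ℕ, 1 ≤ n → 1 ≤ k → k ≤ Nex a1 n →
      vEx a1 α (some (n, k)) = 1 / (1 - α) +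
        epsEx a1 n * ((1 - α ^ Nex a1 n) * α ^ (Nex a1 n - k + 1) -
          (1 - α ^ (Nex a1 n - k + 1))) / (1 - α)) ∧
    (∀ n k : ℕ, 1 ≤ n → Nex a1 n + 1 ≤ k → k ≤ 2 * Nex a1 n →
      vEx a1 α (some (n, k)) = 1 / (1 - α) +
        epsEx a1 n * (1 - α ^ (2 * Nex a1 n - k + 1)) / (1 - α)) ∧
    (∀ n k : ℕ, 1 ≤ n → 1 ≤ k → k ≤ Nex a1 n →
      vEx a1 α (some (n, 1)) ≤ vEx a1 α (some (n, k))) ∧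
    (∀ n k : ℕ, 1 ≤ n → 1 ≤ k → k ≤ Nex a1 n →
      vEx a1 α (some (n, 1)) < vEx a1 α none ∧
      vEx a1 α none < vEx a1 α (some (n, Nex a1 n + k))) ∧
    mEx a1 α = 1 / (1 - α) -
      ⨆ n : {m : ℕ // 1 ≤ m}, epsEx a1 (n : ℕ) * (1 - α ^ Nex a1 (n : ℕ)) ^ 2 / (1 - α) := by
  obtain ⟨hα₀, hα₁⟩ := hα
  have ha1' : a1 ∈ Set.Ioo (-1) 1 := ⟨by linarith [ha1.1], ha1.2⟩
  have hε (n : ℕ) : 0 < epsEx a1 n := (epsEx_mem_Ioc ha1' n).1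
  refine ⟨vEx_none hα₀.le hα₁,
    fun n k _ _ hk => vEx_of_le_Nex hα₀.le hα₁ hk,
    fun n k _ hk₁ hk₂ => vEx_of_Nex_lt hα₀.le hα₁ hk₁ hk₂,
    fun n k _ hk₁ hk₂ => vEx_one_le hα₀.le hα₁ (hε n).le hk₁ hk₂,
    fun n k _ hk₁ hk₂ => ⟨vEx_one_lt_vEx_none hα₀.le hα₁ (hε n),
      vEx_none_lt hα₀.le hα₁ (hε n) (by omega) (by omega)⟩,
    mEx_eq hα₀.le hα₁ hε ⟨1 - a1, ?_⟩⟩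
  rintro _ ⟨n, rfl⟩
  exact (epsEx_mem_Ioc ha1' n).2
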